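/- Let M and a be real numbers and let c ∈ [−1, 1]. Set A = a²(1 − c²)/2 and, for large r, let ρ(r) = (r + √(r² − 2a²(1 − c²)))/2 be the larger root of ρ + A/ρ = r. Then, as r → ∞, (1 − 2M·ρ(r)/(ρ(r)² + a²c²)) − (1 − 2M/r + M·a²(3c² − 1)/r³) = O(r⁻⁴). Equivalently, after the radial shift r' = ρ + a²(1−c²)/(2ρ), the Kerr time-time metric coefficient satisfies 1 − 2Mρ/(ρ² + a²cos²θ) = 1 − 2M/r' + (Ma²/r'³)·(3cos²θ − 1) + O(r'⁻⁴), exhibiting the quadrupole term 6Q⁽²⁾/r'³ with Q⁽²⁾ = (1/6)Ma²(3cos²θ − 1). -/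
import Mathlib


open Filter Asymptotics


private lemma kerr_aux (M B r s D : ℝ) (hr : r ≠ 0) (hD0 : D ≠ 0)
    (hD : D = r * ((r + s) / 2) + B) :
    (1 - 2 * M * ((r + s) / 2) / D) - (1 - 2 * M / r + 2 * M * B / r ^ 3)
      = 2 * M * B * (r * (r - s) / 2 - B) / (r ^ 3 * D) := by
  field_simp
  rw [hD]
  ring

set_option maxHeartbeats 1000000 in
/-- Quadrupole expansion of the Kerr `g_tt` coefficient in the Bondi–Sachs radial
coordinate: with `A = a²(1 − c²)/2` and `ρ(r) = (r + √(r² − 2a²(1 − c²)))/2` the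
larger root of `ρ + A/ρ = r`, one has
`1 − 2Mρ/(ρ² + a²c²) = 1 − 2M/r + Ma²(3c² − 1)/r³ + O(r⁻⁴)` as `r → ∞`. -/
theorem kerr_quadrupole (M a c : ℝ) (hc : c ∈ Set.Icc (-1 : ℝ) 1) :
    (fun r : ℝ =>
        (1 - 2 * M * ((r + Real.sqrt (r ^ 2 - 2 * a ^ 2 * (1 - c ^ 2))) / 2) /
            (((r + Real.sqrt (r ^ 2 - 2 * a ^ 2 * (1 - c ^ 2))) / 2) ^ 2 + a ^ 2 * c ^ 2))
          - (1 - 2 * M / r + M * a ^ 2 * (3 * c ^ 2 - 1) / r ^ 3))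
      =O[atTop] fun r : ℝ => (r ^ 4)⁻¹ := by
  obtain ⟨hc1, hc2⟩ := hc
  have hcsq : c ^ 2 ≤ 1 := by nlinarith
  set K : ℝ := 2 * a ^ 2 * (1 - c ^ 2) with hKdef
  set B : ℝ := a ^ 2 * (3 * c ^ 2 - 1) / 2 with hBdef
  have hK0 : 0 ≤ K := by rw [hKdef]; nlinarith
  clear_value K B
  rw [isBigO_iff]
  refine ⟨8 * |M| * |B| * (K / 2 + |B|), ?_⟩
  filter_upwards [eventually_ge_atTop (1 : ℝ), eventually_ge_atTop (2 * K)] with r hr1 hrK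
  have hr0 : (0:ℝ) < r := by linarith
  have hr2K : 2 * K ≤ r ^ 2 := by nlinarith
  have hnn : 0 ≤ r ^ 2 - K := by nlinarith
  set s : ℝ := Real.sqrt (r ^ 2 - K) with hsdef
  have hs0 : 0 ≤ s := Real.sqrt_nonneg _
  have hs2 : s ^ 2 = r ^ 2 - K := Real.sq_sqrt hnn
  have hsr : s ≤ r := by nlinarith
  set ρ : ℝ := (r + s) / 2 with hρdef
  have hρr : r / 2 ≤ ρ := by rw [hρdef]; linarith
  set D : ℝ := ρ ^ 2 + a ^ 2 * c ^ 2 with hDdef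
  clear_value s ρ D
  clear hsdef
  have hD : D = r * ρ + B := by
    rw [hDdef, hρdef, hBdef]
    have : K = 2 * a ^ 2 * (1 - c ^ 2) := hKdef
    nlinarith [hs2]
  have hDge : r ^ 2 / 4 ≤ D := by
    rw [hDdef]; nlinarith
  have hD0 : (0:ℝ) < D := by nlinarith
  have hMB : M * a ^ 2 * (3 * c ^ 2 - 1) = 2 * M * B := by
    rw [hBdef]; ring
  have key : (1 - 2 * M * ρ / D) - (1 - 2 * M / r + M * a ^ 2 * (3 * c ^ 2 - 1) / r ^ 3)
      = 2 * M * B * (r * (r - s) / 2 - B) / (r ^ 3 * D) := by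
    rw [hMB, hρdef]
    exact kerr_aux M B r s D (ne_of_gt hr0) (ne_of_gt hD0) (by rw [hD, hρdef])
  rw [key]
  have hrs0 : 0 ≤ r * (r - s) := by nlinarith
  have hrsK : r * (r - s) ≤ K := by nlinarith [mul_nonneg hs0 (sub_nonneg.mpr hsr)]
  have hN : |r * (r - s) / 2 - B| ≤ K / 2 + |B| := by
    have := abs_sub (r * (r - s) / 2) B
    have h1 : |r * (r - s) / 2| ≤ K / 2 := by
      rw [abs_of_nonneg (by linarith)]; linarith
    linarith
  have hden : r ^ 4 / 4 ≤ r ^ 3 * D := by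
    have h1 : r ^ 3 * (r ^ 2 / 4) ≤ r ^ 3 * D :=
      mul_le_mul_of_nonneg_left hDge (by positivity)
    nlinarith [pow_le_pow_right₀ hr1 (by norm_num : 4 ≤ 5)]
  have hnorm : ‖(r ^ 4)⁻¹‖ = (r ^ 4)⁻¹ := by
    rw [Real.norm_eq_abs, abs_of_pos (by positivity)]
  rw [Real.norm_eq_abs, hnorm, abs_div, abs_mul, abs_mul]
  have habn : |2 * M| * |B| * |r * (r - s) / 2 - B| ≤ 2 * |M| * |B| * (K / 2 + |B|) := by
    rw [abs_mul, abs_two]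
    have h0 : (0:ℝ) ≤ 2 * |M| * |B| := by positivity
    nlinarith [abs_nonneg M, abs_nonneg B, abs_nonneg (r * (r - s) / 2 - B), hN,
      mul_le_mul_of_nonneg_left hN h0]
  have hdenpos : (0:ℝ) < r ^ 3 * D := by positivity
  have habden : |r ^ 3 * D| = r ^ 3 * D := abs_of_pos hdenpos
  rw [habden]
  rw [div_le_iff₀ hdenpos]
  have hC0 : (0:ℝ) ≤ 2 * |M| * |B| * (K / 2 + |B|) := by positivity
  calc |2 * M| * |B| * |r * (r - s) / 2 - B| ≤ 2 * |M| * |B| * (K / 2 + |B|) := habn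
    _ = (8 * |M| * |B| * (K / 2 + |B|)) * (r ^ 4)⁻¹ * (r ^ 4 / 4) := by
        field_simp; ring
    _ ≤ (8 * |M| * |B| * (K / 2 + |B|)) * (r ^ 4)⁻¹ * (r ^ 3 * D) := by
        have : (0:ℝ) ≤ (8 * |M| * |B| * (K / 2 + |B|)) * (r ^ 4)⁻¹ := by positivity
        exact mul_le_mul_of_nonneg_left hden this
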